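/- arXiv:1603.01193 — 6 statements merged into one kernel-verified Lean document; each statement's English description precedes it below -/
import Mathlib

section
/- For all t ∈ ℝ, |f(t)|^{2γ} ≤ (2γ)^{1/p} |t|. -/
private lemma key_ineq (p γ a : ℝ) (hp : 1 < p) (hγ : 1/2 < γ) (ha : 0 < a) :
    (1 + (2*γ)^(p-1) * a ^ (p*(2*γ-1))) ^ (-(1/p)) * (2*γ) * a ^ (2*γ-1)
      ≤ (2*γ) ^ (1/p) := by
  have hc0 : (0:ℝ) < 2*γ := by linarith
  have hp0 : (0:ℝ) < p := by linarith
  set c := 2*γ with hc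
  set b := a ^ (2*γ-1) with hb
  have hb0 : 0 < b := Real.rpow_pos_of_pos ha _
  have hab : a ^ (p*(2*γ-1)) = b ^ p := by
    rw [hb, ← Real.rpow_mul ha.le, mul_comm]
  set A := 1 + c^(p-1) * a ^ (p*(2*γ-1)) with hA
  have hA0 : 0 < A := by
    have h1 : 0 ≤ c^(p-1) * a ^ (p*(2*γ-1)) :=
      mul_nonneg (Real.rpow_nonneg hc0.le _) (Real.rpow_nonneg ha.le _)
    linarith
  have hcb : 0 ≤ c * b := mul_nonneg hc0.le hb0.le
  have hkey : (c*b)^p ≤ c * A := by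
    have h1 : (c*b)^p = c^p * b^p := Real.mul_rpow hc0.le hb0.le
    have h2 : c * A = c + c^p * b^p := by
      rw [hA, hab, mul_add, mul_one, ← mul_assoc]
      congr 2
      nth_rewrite 1 [← Real.rpow_one c]
      rw [← Real.rpow_add hc0]
      ring_nf
    rw [h1, h2]
    nlinarith [Real.rpow_pos_of_pos hc0 p, Real.rpow_pos_of_pos hb0 p]
  have h3 : c * b ≤ (c * A) ^ (1/p) := by
    have := Real.rpow_le_rpow (Real.rpow_nonneg hcb p) hkey (by positivity : (0:ℝ) ≤ 1/p)
    rwa [← Real.rpow_mul hcb, mul_one_div_cancel hp0.ne', Real.rpow_one] at this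
  have h4 : (c * A) ^ (1/p) = c ^ (1/p) * A ^ (1/p) := Real.mul_rpow hc0.le hA0.le
  have hAp : 0 < A ^ (1/p) := Real.rpow_pos_of_pos hA0 _
  rw [mul_assoc, Real.rpow_neg hA0.le, inv_mul_le_iff₀ hAp]
  rw [h4] at h3
  nlinarith [h3]

theorem stmt4 (p γ : ℝ) (hp : 1 < p) (hγ : 1/2 < γ)
    (f f' : ℝ → ℝ)
    (hodd : ∀ t, f (-t) = - f t) (hf0 : f 0 = 0)
    (hderiv : ∀ t, HasDerivAt f (f' t) t)
    (hf' : ∀ t, f' t = (1 + (2*γ)^(p-1) * |f t| ^ (p*(2*γ-1))) ^ (-(1/p))) :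
    ∀ t : ℝ, |f t| ^ (2*γ) ≤ (2*γ) ^ (1/p) * |t| := by
  have hc1 : (1:ℝ) < 2*γ := by linarith
  have hc0 : (0:ℝ) < 2*γ := by linarith
  -- f' is positive
  have hf'pos : ∀ t, 0 < f' t := by
    intro t
    rw [hf' t]
    apply Real.rpow_pos_of_pos
    have : 0 ≤ (2*γ)^(p-1) * |f t| ^ (p*(2*γ-1)) :=
      mul_nonneg (Real.rpow_nonneg hc0.le _) (Real.rpow_nonneg (abs_nonneg _) _)
    linarith
  have hmono : StrictMono f := by
    apply strictMono_of_deriv_pos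
    intro x
    rw [(hderiv x).deriv]
    exact hf'pos x
  have hfpos : ∀ t : ℝ, 0 ≤ t → 0 ≤ f t := by
    intro t ht
    rw [← hf0]
    exact hmono.monotone ht
  -- the auxiliary function g
  set g : ℝ → ℝ := fun t => (2*γ)^(1/p) * t - f t ^ (2*γ) with hg
  have hgderiv : ∀ t, HasDerivAt g ((2*γ)^(1/p) * 1 - f' t * (2*γ) * f t ^ (2*γ - 1)) t := by
    intro t
    exact ((hasDerivAt_id t).const_mul _).sub ((hderiv t).rpow_const (Or.inr hc1.le))
  have hgmono : MonotoneOn g (Set.Ici (0:ℝ)) := by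
    apply monotoneOn_of_deriv_nonneg (convex_Ici 0)
    · exact (Differentiable.continuous (fun t => (hgderiv t).differentiableAt)).continuousOn
    · exact (Differentiable.differentiableOn (fun t => (hgderiv t).differentiableAt))
    · intro x hx
      rw [interior_Ici] at hx
      rw [(hgderiv x).deriv]
      have hfx : 0 < f x := by rw [← hf0]; exact hmono hx
      have habs : |f x| = f x := abs_of_pos hfx
      have := key_ineq p γ (f x) hp hγ hfx
      rw [hf' x, habs]
      linarith
  -- for t ≥ 0
  have hmain : ∀ t : ℝ, 0 ≤ t → f t ^ (2*γ) ≤ (2*γ)^(1/p) * t := by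
    intro t ht
    have h0 : g 0 ≤ g t := hgmono (Set.self_mem_Ici) ht ht
    have hg0 : g 0 = 0 := by
      simp [hg, hf0, Real.zero_rpow hc0.ne']
    rw [hg0] at h0
    simp only [hg] at h0
    linarith
  intro t
  rcases le_or_gt 0 t with ht | ht
  · rw [abs_of_nonneg (hfpos t ht), abs_of_nonneg ht]
    exact hmain t ht
  · have ht' : 0 ≤ -t := by linarith
    have hft : f t < 0 := by rw [← hf0]; exact hmono ht
    have h1 : |f t| = f (-t) := by
      rw [hodd t]; exact abs_of_neg hft
    rw [h1, abs_of_neg ht]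
    exact hmain (-t) ht'
end

section
/- For all t ≥ 0, f(t)/2 ≤ γ t f'(t) ≤ γ f(t). -/
/-!
Since `f' > 0`, `f` is increasing and nonnegative on `[0, ∞)`, so there
`f' = (1 + c f^q)^(-1/p)` (with `c = (2γ)^(p-1)`, `q = p(2γ-1)`) is decreasing, and the mean
value theorem for `f` gives `t f'(t) ≤ f(t)`. For the lower bound, the mean value theorem is
applied to `f^(2γ)`, whose derivative `2γ f^(2γ-1) f'` equals `2γ (A / (1 + c A))^(1/p)` with
`A = f^q`, hence is increasing; this gives `f(t)^(2γ) ≤ 2γ t f(t)^(2γ-1) f'(t)`.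
-/

open Set

theorem sub_le_mul_deriv_of_monotoneOn {g g' : ℝ → ℝ} {a b : ℝ} (hab : a ≤ b)
    (hg : ∀ x, HasDerivAt g (g' x) x) (hmono : MonotoneOn g' (Icc a b)) :
    g b - g a ≤ (b - a) * g' b := by
  rcases hab.eq_or_lt with rfl | hlt
  · simp
  obtain ⟨x, hx, hslope⟩ := exists_hasDerivAt_eq_slope g g' hlt
    (fun y _ => (hg y).continuousAt.continuousWithinAt) (fun y _ => hg y)
  have hgx : g b - g a = (b - a) * g' x := by
    rw [hslope]; field_simp [(sub_pos.2 hlt).ne']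
  rw [hgx]
  exact mul_le_mul_of_nonneg_left
    (hmono (Ioo_subset_Icc_self hx) (right_mem_Icc.2 hab) hx.2.le) (sub_pos.2 hlt).le

theorem mul_deriv_le_sub_of_antitoneOn {g g' : ℝ → ℝ} {a b : ℝ} (hab : a ≤ b)
    (hg : ∀ x, HasDerivAt g (g' x) x) (hanti : AntitoneOn g' (Icc a b)) :
    (b - a) * g' b ≤ g b - g a := by
  have hneg := sub_le_mul_deriv_of_monotoneOn hab (fun x => (hg x).neg) hanti.neg
  simp only [Pi.neg_apply] at hneg
  linarith

theorem antitoneOn_one_add_mul_rpow_rpow_neg {c q s : ℝ} (hc : 0 ≤ c) (hq : 0 ≤ q)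
    (hs : 0 ≤ s) : AntitoneOn (fun a : ℝ => (1 + c * a ^ q) ^ (-s)) (Ici 0) := by
  rintro a (ha : 0 ≤ a) b - hab
  have hpow : c * a ^ q ≤ c * b ^ q :=
    mul_le_mul_of_nonneg_left (Real.rpow_le_rpow ha hab hq) hc
  have hpos : 0 < 1 + c * a ^ q := by positivity
  exact Real.rpow_le_rpow_of_nonpos hpos (by linarith) (neg_nonpos.2 hs)

theorem rpow_mul_one_add_mul_rpow_rpow_neg_eq {p c r a : ℝ} (hp : p ≠ 0) (hc : 0 ≤ c)
    (ha : 0 ≤ a) :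
    a ^ r * (1 + c * a ^ (p * r)) ^ (-(1 / p))
      = (a ^ (p * r) / (1 + c * a ^ (p * r))) ^ (1 / p) := by
  have hA : 0 ≤ a ^ (p * r) := Real.rpow_nonneg ha _
  have hB : 0 ≤ 1 + c * a ^ (p * r) := by positivity
  have hr : a ^ r = (a ^ (p * r)) ^ (1 / p) := by
    rw [← Real.rpow_mul ha]; field_simp
  rw [hr, Real.rpow_neg hB, Real.div_rpow hA hB]
  ring

theorem monotoneOn_rpow_mul_one_add_mul_rpow_rpow_neg {p c r : ℝ} (hp : 0 < p) (hc : 0 ≤ c)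
    (hr : 0 ≤ r) :
    MonotoneOn (fun a : ℝ => a ^ r * (1 + c * a ^ (p * r)) ^ (-(1 / p))) (Ici 0) := by
  rintro a (ha : 0 ≤ a) b (hb : 0 ≤ b) hab
  simp only [rpow_mul_one_add_mul_rpow_rpow_neg_eq hp.ne' hc ha,
    rpow_mul_one_add_mul_rpow_rpow_neg_eq hp.ne' hc hb]
  have hA : 0 ≤ a ^ (p * r) := Real.rpow_nonneg ha _
  have hAB : a ^ (p * r) ≤ b ^ (p * r) := Real.rpow_le_rpow ha hab (by positivity)
  -- `x ↦ x / (1 + c x)` is monotone on `[0, ∞)`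
  have hdiv : a ^ (p * r) / (1 + c * a ^ (p * r)) ≤ b ^ (p * r) / (1 + c * b ^ (p * r)) := by
    rw [div_le_div_iff₀ (by positivity) (by positivity)]
    nlinarith
  exact Real.rpow_le_rpow (by positivity) hdiv (by positivity)

section

variable {f f' : ℝ → ℝ} {p c r t : ℝ}

theorem mul_deriv_le_of_deriv_eq_one_add_mul_rpow_rpow_neg {q s : ℝ} (hc : 0 ≤ c) (hq : 0 ≤ q)
    (hs : 0 ≤ s) (hf0 : f 0 = 0) (hderiv : ∀ x, HasDerivAt f (f' x) x) (hmono : Monotone f)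
    (hf' : ∀ x, 0 ≤ x → f' x = (1 + c * f x ^ q) ^ (-s)) (ht : 0 ≤ t) :
    t * f' t ≤ f t := by
  have hanti : AntitoneOn f' (Icc 0 t) := by
    rintro a ⟨ha, -⟩ b ⟨hb, -⟩ hab
    rw [hf' a ha, hf' b hb]
    exact antitoneOn_one_add_mul_rpow_rpow_neg hc hq hs (hf0 ▸ hmono ha) (hf0 ▸ hmono hb)
      (hmono hab)
  simpa [hf0] using mul_deriv_le_sub_of_antitoneOn ht hderiv hanti

theorem le_mul_deriv_of_deriv_eq_one_add_mul_rpow_rpow_neg (hp : 0 < p) (hc : 0 ≤ c)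
    (hr : 0 ≤ r) (hf0 : f 0 = 0) (hderiv : ∀ x, HasDerivAt f (f' x) x) (hmono : Monotone f)
    (hf' : ∀ x, 0 ≤ x → f' x = (1 + c * f x ^ (p * r)) ^ (-(1 / p))) (ht : 0 ≤ t) :
    f t ≤ (r + 1) * t * f' t := by
  have hf_nonneg : ∀ x, 0 ≤ x → 0 ≤ f x := fun x hx => hf0 ▸ hmono hx
  have hv : ∀ x, HasDerivAt (fun y => f y ^ (r + 1)) ((r + 1) * (f x ^ r * f' x)) x := by
    intro x
    convert (hderiv x).rpow_const (p := r + 1) (Or.inr (by linarith)) using 1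
    rw [add_sub_cancel_right]; ring
  have hmono' : MonotoneOn (fun x => (r + 1) * (f x ^ r * f' x)) (Icc 0 t) := by
    rintro a ⟨ha, -⟩ b ⟨hb, -⟩ hab
    simp only [hf' a ha, hf' b hb]
    exact mul_le_mul_of_nonneg_left (monotoneOn_rpow_mul_one_add_mul_rpow_rpow_neg hp hc hr
      (hf_nonneg a ha) (hf_nonneg b hb) (hmono hab)) (by linarith)
  have hmvt := sub_le_mul_deriv_of_monotoneOn ht hv hmono'
  rw [hf0, Real.zero_rpow (by linarith), sub_zero, sub_zero] at hmvt
  rcases (hf_nonneg t ht).eq_or_lt with h0 | hpos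
  · have hft := hf_nonneg t ht
    rw [← h0, hf' t ht]
    positivity
  · rw [Real.rpow_add_one hpos.ne'] at hmvt
    have : f t ^ r * f t ≤ f t ^ r * ((r + 1) * t * f' t) := by linarith
    exact le_of_mul_le_mul_left this (Real.rpow_pos_of_pos hpos r)

end

theorem stmt5_general (p γ : ℝ) (hp : 1 < p) (hγ : 1/2 < γ)
    (f f' : ℝ → ℝ)
    (hf0 : f 0 = 0)
    (hderiv : ∀ t, HasDerivAt f (f' t) t)
    (hf' : ∀ t, f' t = (1 + (2*γ)^(p-1) * |f t| ^ (p*(2*γ-1))) ^ (-(1/p))) :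
    ∀ t : ℝ, 0 ≤ t → f t / 2 ≤ γ * t * f' t ∧ γ * t * f' t ≤ γ * f t := by
  intro t ht
  have hγ0 : 0 < γ := by linarith
  have hc : 0 ≤ (2 * γ) ^ (p - 1) := by positivity
  have hf'_pos : ∀ x, 0 < f' x := fun x => (hf' x).symm ▸ by positivity
  have hmono : Monotone f := monotone_of_hasDerivAt_nonneg hderiv fun x => (hf'_pos x).le
  have hf'_eq : ∀ x, 0 ≤ x → f' x = (1 + (2*γ)^(p-1) * f x ^ (p*(2*γ-1))) ^ (-(1/p)) :=
    fun x hx => by rw [hf', abs_of_nonneg (hf0 ▸ hmono hx)]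
  have hlower := le_mul_deriv_of_deriv_eq_one_add_mul_rpow_rpow_neg (by linarith) hc
    (by linarith) hf0 hderiv hmono hf'_eq ht
  have hupper := mul_deriv_le_of_deriv_eq_one_add_mul_rpow_rpow_neg hc (by nlinarith)
    (by positivity) hf0 hderiv hmono hf'_eq ht
  rw [sub_add_cancel] at hlower
  constructor
  · linarith
  · calc γ * t * f' t = γ * (t * f' t) := by ring
      _ ≤ γ * f t := mul_le_mul_of_nonneg_left hupper hγ0.le

theorem stmt5 (p γ : ℝ) (hp : 1 < p) (hγ : 1/2 < γ)
    (f f' : ℝ → ℝ)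
    (hodd : ∀ t, f (-t) = - f t) (hf0 : f 0 = 0)
    (hderiv : ∀ t, HasDerivAt f (f' t) t)
    (hf' : ∀ t, f' t = (1 + (2*γ)^(p-1) * |f t| ^ (p*(2*γ-1))) ^ (-(1/p))) :
    ∀ t : ℝ, 0 ≤ t → f t / 2 ≤ γ * t * f' t ∧ γ * t * f' t ≤ γ * f t :=
  stmt5_general p γ hp hγ f f' hf0 hderiv hf'
end

section
/- The function t ↦ f(t)/t^{1/(2γ)} is increasing on (0,∞), and |f(t)|/|t|^{1/(2γ)} converges to a positive constant A as |t| → ∞. -/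
/-!
Put `a = 2γ` and `H = f ^ a`. On `t > 0` we have `f > 0`, and a direct computation from the
equation gives `H' = (a u / (1 + u)) ^ (1 / p)` with `u = a ^ (p - 1) f ^ (p (a - 1))`. Since `f`
increases, so does `H'`: hence `H` is strictly convex with `H 0 = 0`, and its secant slope
`H t / t` is strictly increasing, which is the first claim after taking `a`-th roots. In
particular `H t ≥ H 1 * t` for `t ≥ 1`, so `f → ∞`, `u → ∞` and `H' → a ^ (1 / p)`; by a
L'Hôpital-type argument `H t / t → a ^ (1 / p)`, i.e. `f t / t ^ (1 / a) → A = a ^ (1 / (a p))`.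
The case `t → -∞` follows by oddness.
-/
open Filter Set Topology

theorem tendsto_div_self_atTop_of_tendsto_deriv {g g' : ℝ → ℝ} {L : ℝ}
    (hg : ∀ᶠ t in atTop, HasDerivAt g (g' t) t) (hg' : Tendsto g' atTop (𝓝 L)) :
    Tendsto (fun t => g t / t) atTop (𝓝 L) := by
  set k : ℝ → ℝ := fun t => g t - L * t
  have hk : k =o[atTop] id := by
    refine Asymptotics.isLittleO_iff.2 fun c hc => ?_
    obtain ⟨s, hs0, hs⟩ := (atTop_basis' 0).eventually_iff.1
      (hg.and (hg'.eventually (Metric.closedBall_mem_nhds L (half_pos hc))))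
    have hlip : ∀ t ∈ Ici s, ‖k t - k s‖ ≤ c / 2 * ‖t - s‖ := fun t ht =>
      (convex_Ici s).norm_image_sub_le_of_norm_hasDerivWithin_le
        (fun x hx => ((hs hx).1.sub ((hasDerivAt_id x).const_mul L)).hasDerivWithinAt)
        (fun x hx => by simpa [Real.dist_eq] using (hs hx).2) self_mem_Ici ht
    filter_upwards [eventually_ge_atTop s, eventually_ge_atTop (2 * ‖k s‖ / c)] with t hts htk
    have hks : ‖k s‖ ≤ c / 2 * t := by rw [div_le_iff₀ hc] at htk; linarith
    calc ‖k t‖ ≤ ‖k s‖ + ‖k t - k s‖ := norm_le_norm_add_norm_sub' _ _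
      _ ≤ c / 2 * t + c / 2 * (t - s) := by
        gcongr
        simpa [Real.norm_of_nonneg (sub_nonneg.2 hts)] using hlip t hts
      _ ≤ c * ‖id t‖ := by rw [id, Real.norm_of_nonneg (hs0.trans hts)]; nlinarith
  refine (zero_add L ▸ hk.tendsto_div_nhds_zero.add_const L).congr' ?_
  filter_upwards [eventually_gt_atTop 0] with t ht
  simp only [k, id, sub_div, mul_div_cancel_right₀ _ ht.ne']
  ring

theorem strictMonoOn_div_self_of_strictMonoOn_deriv {g g' : ℝ → ℝ}
    (hg : ContinuousOn g (Ici 0)) (hg0 : g 0 = 0) (hderiv : ∀ t > 0, HasDerivAt g (g' t) t)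
    (hmono : StrictMonoOn g' (Ioi 0)) :
    StrictMonoOn (fun t => g t / t) (Ioi 0) := by
  have hconv : StrictConvexOn ℝ (Ici 0) g := by
    refine StrictMonoOn.strictConvexOn_of_deriv (convex_Ici 0) hg ?_
    rw [interior_Ici]
    exact hmono.congr fun t ht => ((hderiv t ht).deriv).symm
  intro x hx y hy hxy
  simpa [hg0] using hconv.secant_strict_mono self_mem_Ici (mem_Ici_of_Ioi hx)
    (mem_Ici_of_Ioi hy) (ne_of_gt hx) (ne_of_gt hy) hxy

theorem div_rpow_one_div_eq {x t a : ℝ} (hx : 0 ≤ x) (ht : 0 ≤ t) (ha : a ≠ 0) :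
    x / t ^ (1 / a) = (x ^ a / t) ^ (1 / a) := by
  rw [Real.div_rpow (by positivity) ht, one_div, Real.rpow_rpow_inv hx ha]

theorem strictMonoOn_div_one_add : StrictMonoOn (fun u : ℝ => u / (1 + u)) (Ici 0) := by
  intro u hu v hv huv
  simp only [mem_Ici] at hu hv
  rw [div_lt_div_iff₀ (by positivity) (by positivity)]
  linarith

theorem tendsto_div_one_add_atTop : Tendsto (fun u : ℝ => u / (1 + u)) atTop (𝓝 1) := by
  have h : Tendsto (fun u : ℝ => 1 - (1 + u)⁻¹) atTop (𝓝 (1 - 0)) :=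
    (tendsto_inv_atTop_zero.comp (tendsto_atTop_add_const_left atTop 1 tendsto_id)).const_sub 1
  rw [sub_zero] at h
  refine h.congr' ?_
  filter_upwards [eventually_gt_atTop 0] with u hu
  field_simp
  ring

noncomputable def powRate (a p x : ℝ) : ℝ :=
  (a * (a ^ (p - 1) * x ^ (p * (a - 1)) / (1 + a ^ (p - 1) * x ^ (p * (a - 1))))) ^ (1 / p)

theorem powRate_eq {a p x : ℝ} (ha : 0 < a) (hp : p ≠ 0) (hx : 0 < x) :
    a * x ^ (a - 1) * (1 + a ^ (p - 1) * x ^ (p * (a - 1))) ^ (-(1 / p)) = powRate a p x := by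
  set u := a ^ (p - 1) * x ^ (p * (a - 1))
  have hu : 0 < 1 + u := by positivity
  have hau : a * u = (a * x ^ (a - 1)) ^ p := by
    rw [Real.mul_rpow ha.le (by positivity), ← Real.rpow_mul hx.le, ← mul_assoc,
      ← Real.rpow_one_add' ha.le (by simpa using hp), mul_comm (a - 1)]
    ring_nf
  rw [powRate, mul_div_assoc', Real.div_rpow (by positivity) hu.le, hau, one_div,
    Real.rpow_rpow_inv (by positivity) hp, Real.rpow_neg hu.le, div_eq_mul_inv]

theorem strictMonoOn_powRate {a p : ℝ} (ha : 1 < a) (hp : 0 < p) :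
    StrictMonoOn (powRate a p) (Ioi 0) := by
  intro x hx y hy hxy
  simp only [mem_Ioi] at hx hy
  have hq : 0 < p * (a - 1) := by nlinarith
  have hxy' : a ^ (p - 1) * x ^ (p * (a - 1)) < a ^ (p - 1) * y ^ (p * (a - 1)) := by gcongr
  have := strictMonoOn_div_one_add (mem_Ici.2 (by positivity)) (mem_Ici.2 (by positivity)) hxy'
  simp only at this
  unfold powRate
  gcongr

theorem tendsto_powRate_atTop {a p : ℝ} (ha : 1 < a) (hp : 0 < p) :
    Tendsto (powRate a p) atTop (𝓝 (a ^ (1 / p))) := by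
  have hq : 0 < p * (a - 1) := by nlinarith
  have h := ((tendsto_rpow_atTop hq).const_mul_atTop (by positivity : 0 < a ^ (p - 1)))
  have := ((tendsto_div_one_add_atTop.comp h).const_mul a)
  rw [mul_one] at this
  exact ((Real.continuousAt_rpow_const _ _ (Or.inr (by positivity))).tendsto.comp this)

def SolvesODE (a p : ℝ) (f : ℝ → ℝ) : Prop :=
  ∀ t, HasDerivAt f ((1 + a ^ (p - 1) * |f t| ^ (p * (a - 1))) ^ (-(1 / p))) t

namespace SolvesODE

variable {a p : ℝ} {f : ℝ → ℝ}

theorem strictMono (hf : SolvesODE a p f) (ha : 0 < a) : StrictMono f :=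
  strictMono_of_hasDerivAt_pos hf fun _ => by positivity

theorem pos (hf : SolvesODE a p f) (ha : 0 < a) (hf0 : f 0 = 0) {t : ℝ} (ht : 0 < t) : 0 < f t :=
  hf0 ▸ hf.strictMono ha ht

theorem continuous (hf : SolvesODE a p f) : Continuous f :=
  continuous_iff_continuousAt.2 fun t => (hf t).continuousAt

theorem hasDerivAt_rpow (hf : SolvesODE a p f) (ha : 0 < a) (hp : p ≠ 0) {t : ℝ}
    (ht : 0 < f t) : HasDerivAt (fun s => f s ^ a) (powRate a p (f t)) t := by
  convert (hf t).rpow_const (p := a) (Or.inl ht.ne') using 1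
  rw [← powRate_eq ha hp ht, abs_of_pos ht]
  ring

theorem strictMonoOn_rpow_div (hf : SolvesODE a p f) (ha : 1 < a) (hp : 0 < p)
    (hf0 : f 0 = 0) : StrictMonoOn (fun t => f t ^ a / t) (Ioi 0) := by
  have ha0 : 0 < a := by linarith
  have hpos : MapsTo f (Ioi 0) (Ioi 0) := fun _ ht => hf.pos ha0 hf0 ht
  exact strictMonoOn_div_self_of_strictMonoOn_deriv
    (hf.continuous.rpow_const fun _ => Or.inr ha0.le).continuousOn (by simp [hf0, ha0.ne'])
    (fun t ht => hf.hasDerivAt_rpow ha0 hp.ne' (hpos ht))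
    ((strictMonoOn_powRate ha hp).comp ((hf.strictMono ha0).strictMonoOn _) hpos)

theorem tendsto_atTop (hf : SolvesODE a p f) (ha : 1 < a) (hp : 0 < p) (hf0 : f 0 = 0) :
    Tendsto f atTop atTop := by
  have ha0 : 0 < a := by linarith
  have hlin : ∀ t ≥ 1, f 1 ^ a * t ≤ f t ^ a := fun t ht => by
    have := (hf.strictMonoOn_rpow_div ha hp hf0).monotoneOn (mem_Ioi.2 one_pos)
      (mem_Ioi.2 (one_pos.trans_le ht)) ht
    rwa [div_one, le_div_iff₀ (one_pos.trans_le ht)] at this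
  have hpow : Tendsto (fun t => f t ^ a) atTop atTop :=
    tendsto_atTop_mono' _ (eventually_atTop.2 ⟨1, hlin⟩)
      (tendsto_id.const_mul_atTop (Real.rpow_pos_of_pos (hf.pos ha0 hf0 one_pos) a))
  refine ((tendsto_rpow_atTop (inv_pos.2 ha0)).comp hpow).congr' ?_
  filter_upwards [eventually_gt_atTop 0] with t ht
  exact Real.rpow_rpow_inv (hf.pos ha0 hf0 ht).le ha0.ne'

theorem tendsto_rpow_div (hf : SolvesODE a p f) (ha : 1 < a) (hp : 0 < p) (hf0 : f 0 = 0) :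
    Tendsto (fun t => f t ^ a / t) atTop (𝓝 (a ^ (1 / p))) := by
  have hf_top := hf.tendsto_atTop ha hp hf0
  refine tendsto_div_self_atTop_of_tendsto_deriv ?_ ((tendsto_powRate_atTop ha hp).comp hf_top)
  filter_upwards [hf_top.eventually_gt_atTop 0] with t ht
  exact hf.hasDerivAt_rpow (by linarith) hp.ne' ht

theorem strictMonoOn_div_rpow (hf : SolvesODE a p f) (ha : 1 < a) (hp : 0 < p)
    (hf0 : f 0 = 0) : StrictMonoOn (fun t => f t / t ^ (1 / a)) (Ioi 0) := by
  have ha0 : 0 < a := by linarith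
  have hpos : ∀ t ∈ Ioi 0, 0 < f t := fun _ ht => hf.pos ha0 hf0 ht
  refine ((Real.strictMonoOn_rpow_Ici_of_exponent_pos (one_div_pos.2 ha0)).comp
    (hf.strictMonoOn_rpow_div ha hp hf0) fun t ht => ?_).congr fun t ht => ?_
  · exact div_nonneg (Real.rpow_nonneg (hpos t ht).le a) (le_of_lt ht)
  · exact (div_rpow_one_div_eq (hpos t ht).le (le_of_lt ht) ha0.ne').symm

theorem tendsto_abs_div_rpow (hf : SolvesODE a p f) (ha : 1 < a) (hp : 0 < p)
    (hf0 : f 0 = 0) :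
    Tendsto (fun t => |f t| / |t| ^ (1 / a)) atTop (𝓝 ((a ^ (1 / p)) ^ (1 / a))) := by
  have ha0 : 0 < a := by linarith
  refine ((Real.continuousAt_rpow_const _ _ (Or.inr (one_div_pos.2 ha0).le)).tendsto.comp
    (hf.tendsto_rpow_div ha hp hf0)).congr' ?_
  filter_upwards [eventually_gt_atTop 0] with t ht
  have hft := hf.pos ha0 hf0 ht
  rw [abs_of_pos hft, abs_of_pos ht, div_rpow_one_div_eq hft.le ht.le ha0.ne']
  rfl

end SolvesODE

theorem stmt6 (p γ : ℝ) (hp : 1 < p) (hγ : 1/2 < γ)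
    (f f' : ℝ → ℝ)
    (hodd : ∀ t, f (-t) = - f t) (hf0 : f 0 = 0)
    (hderiv : ∀ t, HasDerivAt f (f' t) t)
    (hf' : ∀ t, f' t = (1 + (2*γ)^(p-1) * |f t| ^ (p*(2*γ-1))) ^ (-(1/p))) :
    StrictMonoOn (fun t => f t / t ^ (1/(2*γ))) (Set.Ioi 0) ∧
    ∃ A > 0, Filter.Tendsto (fun t => |f t| / |t| ^ (1/(2*γ)))
      (Filter.cocompact ℝ) (nhds A) := by
  have ha : 1 < 2 * γ := by linarith
  have hp0 : 0 < p := by linarith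
  have hf : SolvesODE (2 * γ) p f := fun t => hf' t ▸ hderiv t
  have hTop := hf.tendsto_abs_div_rpow ha hp0 hf0
  refine ⟨hf.strictMonoOn_div_rpow ha hp0 hf0, ((2 * γ) ^ (1 / p)) ^ (1 / (2 * γ)),
    by positivity, ?_⟩
  rw [cocompact_eq_atBot_atTop, tendsto_sup]
  refine ⟨(hTop.comp tendsto_neg_atBot_atTop).congr fun t => ?_, hTop⟩
  simp only [Function.comp_apply, hodd, abs_neg]
end

section
/- There exists a constant C > 0 such that |t| ≤ C(|f(t)| + |f(t)|^{2γ}) for all t ∈ ℝ. -/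
lemma aux_one_add_rpow (B p : ℝ) (hB : 0 < B) (hp : 1 ≤ p) :
    1 + B ^ p ≤ (1 + B) ^ p := by
  have h1 : (0:ℝ) < 1 + B := by linarith
  have hev : (1 + B) ^ p = (1 + B) ^ (p - 1) * (1 + B) := by
    rw [← Real.rpow_add_one h1.ne']; ring_nf
  rw [hev]
  have h2 : (1:ℝ) ≤ (1 + B) ^ (p - 1) :=
    Real.one_le_rpow (by linarith) (by linarith)
  have h3 : B ^ (p - 1) ≤ (1 + B) ^ (p - 1) :=
    Real.rpow_le_rpow hB.le (by linarith) (by linarith)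
  have h4 : B ^ (p - 1) * B = B ^ p := by
    rw [← Real.rpow_add_one hB.ne']; ring_nf
  calc 1 + B ^ p = 1 + B ^ (p - 1) * B := by rw [h4]
    _ ≤ (1 + B) ^ (p - 1) + (1 + B) ^ (p - 1) * B := by nlinarith
    _ = (1 + B) ^ (p - 1) * (1 + B) := by ring

theorem stmt7 (p γ : ℝ) (hp : 1 < p) (hγ : 1/2 < γ)
    (f f' : ℝ → ℝ)
    (hodd : ∀ t, f (-t) = - f t) (hf0 : f 0 = 0)
    (hderiv : ∀ t, HasDerivAt f (f' t) t)
    (hf' : ∀ t, f' t = (1 + (2*γ)^(p-1) * |f t| ^ (p*(2*γ-1))) ^ (-(1/p))) :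
    ∃ C > 0, ∀ t : ℝ, |t| ≤ C * (|f t| + |f t| ^ (2*γ)) := by
  have hp0 : (0:ℝ) < p := by linarith
  have hγ1 : (1:ℝ) < 2*γ := by linarith
  have hf'pos : ∀ t, 0 < f' t := by
    intro t
    rw [hf' t]
    apply Real.rpow_pos_of_pos
    have : (0:ℝ) < (2*γ)^(p-1) := Real.rpow_pos_of_pos (by linarith) _
    have h2 : (0:ℝ) ≤ |f t| ^ (p*(2*γ-1)) := Real.rpow_nonneg (abs_nonneg _) _
    nlinarith
  have hmono : StrictMono f := by
    apply strictMono_of_deriv_pos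
    intro x
    rw [(hderiv x).deriv]
    exact hf'pos x
  have hcontf : Continuous f := by
    rw [continuous_iff_continuousAt]
    exact fun x => (hderiv x).continuousAt
  -- key claim for t ≥ 0
  have key : ∀ t, 0 ≤ t → t ≤ f t + (f t) ^ (2*γ) := by
    intro t ht
    set g : ℝ → ℝ := fun s => f s + (f s) ^ (2*γ) - s with hg
    have hgc : ContinuousOn g (Set.Ici 0) := by
      apply Continuous.continuousOn
      exact ((hcontf.add (hcontf.rpow_const (fun x => Or.inr (by linarith)))).sub
        continuous_id)
    have hgd : ∀ x ∈ Set.Ioi (0:ℝ),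
        HasDerivAt g (f' x * (1 + 2*γ * (f x) ^ (2*γ - 1)) - 1) x := by
      intro x hx
      have hfx : 0 < f x := by
        rw [← hf0]; exact hmono hx
      have h1 : HasDerivAt (fun s => (f s) ^ (2*γ))
          ((2*γ * (f x) ^ (2*γ - 1)) * f' x) x :=
        (Real.hasDerivAt_rpow_const (Or.inl hfx.ne')).comp x (hderiv x)
      have h2 : HasDerivAt g (f' x + (2*γ * (f x) ^ (2*γ - 1)) * f' x - 1) x :=
        ((hderiv x).add h1).sub (hasDerivAt_id x)
      convert h2 using 1
      ring
    have hkey : ∀ x ∈ Set.Ioi (0:ℝ), 1 ≤ f' x * (1 + 2*γ * (f x) ^ (2*γ - 1)) := by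
      intro x hx
      have hfx : 0 < f x := by rw [← hf0]; exact hmono hx
      set y := f x with hy
      set B := 2*γ * y ^ (2*γ - 1) with hB
      have hypos : (0:ℝ) < y ^ (2*γ - 1) := Real.rpow_pos_of_pos hfx _
      have hBpos : 0 < B := by positivity
      set A := (2*γ)^(p-1) * |y| ^ (p*(2*γ-1)) with hA
      have hApos : 0 < A := by
        have : (0:ℝ) < (2*γ)^(p-1) := Real.rpow_pos_of_pos (by linarith) _
        have h2 : (0:ℝ) < |y| ^ (p*(2*γ-1)) :=
          Real.rpow_pos_of_pos (abs_pos.mpr hfx.ne') _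
        positivity
      -- B ^ p = (2γ)^p * y^(p(2γ-1))
      have hBp : B ^ p = (2*γ)^p * |y| ^ (p*(2*γ-1)) := by
        rw [hB, Real.mul_rpow (by linarith) hypos.le, abs_of_pos hfx,
          ← Real.rpow_mul hfx.le]
        ring_nf
      have hAB : A ≤ B ^ p := by
        rw [hBp, hA]
        have h1 : (2*γ)^(p-1) ≤ (2*γ)^p :=
          Real.rpow_le_rpow_of_exponent_le (by linarith) (by linarith)
        have h2 : (0:ℝ) ≤ |y| ^ (p*(2*γ-1)) := Real.rpow_nonneg (abs_nonneg _) _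
        nlinarith
      have hmain : (1 + A) ^ (1/p) ≤ 1 + B := by
        have h1 : 1 + A ≤ (1 + B) ^ p := by
          have := aux_one_add_rpow B p hBpos hp.le
          linarith
        have h2 : (1 + A) ^ (1/p) ≤ ((1 + B) ^ p) ^ (1/p) :=
          Real.rpow_le_rpow (by linarith) h1 (by positivity)
        rwa [← Real.rpow_mul (by linarith), mul_one_div, div_self hp0.ne',
          Real.rpow_one] at h2
      have hfx' : f' x = ((1 + A) ^ (1/p))⁻¹ := by
        rw [hf' x, ← hy, ← hA, Real.rpow_neg (by linarith)]
      have hpow_pos : (0:ℝ) < (1 + A) ^ (1/p) := Real.rpow_pos_of_pos (by linarith) _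
      rw [hfx']
      calc (1:ℝ) = ((1 + A) ^ (1/p))⁻¹ * ((1 + A) ^ (1/p)) :=
            (inv_mul_cancel₀ hpow_pos.ne').symm
        _ ≤ ((1 + A) ^ (1/p))⁻¹ * (1 + B) :=
            mul_le_mul_of_nonneg_left hmain (by positivity)
        _ = ((1 + A) ^ (1/p))⁻¹ * (1 + 2*γ * y ^ (2*γ - 1)) := by rw [hB]
    have hmonog : MonotoneOn g (Set.Ici 0) := by
      apply monotoneOn_of_deriv_nonneg (convex_Ici 0) hgc
      · intro x hx
        rw [interior_Ici] at hx
        exact ((hgd x hx).differentiableAt).differentiableWithinAt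
      · intro x hx
        rw [interior_Ici] at hx
        rw [(hgd x hx).deriv]
        have := hkey x hx
        linarith
    have hg0 : g 0 = 0 := by
      simp [hg, hf0, Real.zero_rpow (by linarith : (2*γ:ℝ) ≠ 0)]
    have := hmonog (Set.self_mem_Ici) (Set.mem_Ici.mpr ht) ht
    rw [hg0] at this
    simp only [hg] at this
    linarith
  refine ⟨1, one_pos, ?_⟩
  intro t
  rw [one_mul]
  rcases le_or_gt 0 t with ht | ht
  · have hft : 0 ≤ f t := by
      rw [← hf0]; exact hmono.monotone ht
    rw [abs_of_nonneg ht, abs_of_nonneg hft]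
    exact key t ht
  · have hneg : f t = - f (-t) := by
      have := hodd (-t); rw [neg_neg] at this; linarith
    have hft : 0 ≤ f (-t) := by
      rw [← hf0]; exact hmono.monotone (by linarith)
    rw [abs_of_neg ht, hneg, abs_neg, abs_of_nonneg hft]
    exact key (-t) (by linarith)
end

section
/- For every δ ≥ 2γ - 1, the function t ↦ f'(t) f(t)^δ is non-decreasing on [0,∞). In fact its derivative is positive for t > 0: (f'(t) f(t)^δ)' = (1 + (2γ)^{p-1} f(t)^{p(2γ-1)})^{-2/p} f(t)^{δ-1} · [δ + (2γ)^{p-1}(δ + 1 - 2γ) f(t)^{p(2γ-1)}] / [1 + (2γ)^{p-1} f(t)^{p(2γ-1)}] > 0. -/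
/-!
Write `A = 1 + c f^{p(2γ-1)}` with `c = (2γ)^{p-1}`, so that `f' = A^{-1/p}` on `t > 0`.
Since `f' > 0`, `f` is increasing and positive on `(0, ∞)`, and the chain rule gives
`(f' f^δ)' = f' · (A^{-1/p} f^δ)'(f) = A^{-2/p} f^{δ-1} (δ A - c(2γ-1) f^{p(2γ-1)}) / A`,
whose numerator is `δ + c(δ+1-2γ) f^{p(2γ-1)} > 0` because `δ ≥ 2γ - 1 > 0`.
Monotonicity on `[0, ∞)` then follows, as `f' f^δ` vanishes at `0` and is nonnegative.
-/

open Set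

lemma monotoneOn_Ici_of_monotoneOn_Ioi {β : Type*} [Preorder β] {g : ℝ → β} {a : ℝ}
    (hIoi : MonotoneOn g (Ioi a)) (ha : ∀ t, a < t → g a ≤ g t) : MonotoneOn g (Ici a) := by
  rw [← Ioi_insert, monotoneOn_insert_iff]
  exact ⟨fun b hb hba => absurd hba (not_le.mpr hb), fun b hb _ => ha b hb, hIoi⟩

lemma hasDerivAt_one_add_mul_rpow_rpow_mul_rpow {c p γ δ x : ℝ} (hp : p ≠ 0) (hc : 0 ≤ c)
    (hx : 0 < x) :
    HasDerivAt (fun y => (1 + c * y ^ (p*(2*γ-1))) ^ (-(1/p)) * y ^ δ)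
      ((1 + c * x ^ (p*(2*γ-1))) ^ (-(1/p)) * x ^ (δ-1) *
        ((δ + c * (δ + 1 - 2*γ) * x ^ (p*(2*γ-1))) / (1 + c * x ^ (p*(2*γ-1))))) x := by
  set Q := p*(2*γ-1)
  set A := 1 + c * x ^ Q
  have hA : 0 < A := by positivity
  have hbase : HasDerivAt (fun y => 1 + c * y ^ Q) (c * (Q * x ^ (Q-1))) x :=
    ((Real.hasDerivAt_rpow_const (Or.inl hx.ne')).const_mul c).const_add 1
  refine ((hbase.rpow_const (Or.inl hA.ne')).mul
    (Real.hasDerivAt_rpow_const (p := δ) (Or.inl hx.ne'))).congr_deriv ?_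
  have hxQ : x ^ (Q-1) = x ^ Q / x := Real.rpow_sub_one hx.ne' Q
  have hxδ : x ^ δ = x ^ (δ-1) * x := by
    rw [Real.rpow_sub_one hx.ne', div_mul_cancel₀ _ hx.ne']
  have hA' : A ^ (-(1/p) - 1) = A ^ (-(1/p)) / A := Real.rpow_sub_one hA.ne' _
  rw [hxQ, hxδ, hA']
  field_simp
  ring

lemma hasDerivAt_mul_rpow_of_pos {c p γ δ t : ℝ} {f f' : ℝ → ℝ} (hp : p ≠ 0)
    (hc : 0 ≤ c) (hderiv : HasDerivAt f (f' t) t)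
    (hf' : ∀ s, f' s = (1 + c * |f s| ^ (p*(2*γ-1))) ^ (-(1/p))) (hft : 0 < f t) :
    HasDerivAt (fun s => f' s * f s ^ δ)
      ((1 + c * f t ^ (p*(2*γ-1))) ^ (-(2/p)) * f t ^ (δ-1) *
        ((δ + c * (δ + 1 - 2*γ) * f t ^ (p*(2*γ-1))) / (1 + c * f t ^ (p*(2*γ-1))))) t := by
  have hA : 0 < 1 + c * f t ^ (p*(2*γ-1)) := by positivity
  have hfpos : ∀ᶠ s in nhds t, 0 < f s :=
    hderiv.continuousAt.eventually (eventually_gt_nhds hft)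
  have heq : (fun s => f' s * f s ^ δ) =ᶠ[nhds t]
      (fun y => (1 + c * y ^ (p*(2*γ-1))) ^ (-(1/p)) * y ^ δ) ∘ f := by
    filter_upwards [hfpos] with s hs
    rw [Function.comp_apply, hf' s, abs_of_pos hs]
  refine (((hasDerivAt_one_add_mul_rpow_rpow_mul_rpow hp hc hft).comp t
    hderiv).congr_of_eventuallyEq heq).congr_deriv ?_
  rw [hf' t, abs_of_pos hft, show -(2/p) = -(1/p) + -(1/p) by ring, Real.rpow_add hA]
  ring

lemma one_add_mul_rpow_deriv_pos {c p γ δ x : ℝ} (hc : 0 ≤ c) (hδ : 0 < δ)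
    (hδγ : 2*γ - 1 ≤ δ) (hx : 0 < x) :
    0 < (1 + c * x ^ (p*(2*γ-1))) ^ (-(2/p)) * x ^ (δ-1) *
      ((δ + c * (δ + 1 - 2*γ) * x ^ (p*(2*γ-1))) / (1 + c * x ^ (p*(2*γ-1)))) := by
  have hnum : 0 ≤ c * (δ + 1 - 2*γ) * x ^ (p*(2*γ-1)) :=
    mul_nonneg (mul_nonneg hc (by linarith)) (Real.rpow_nonneg hx.le _)
  have hA : 0 < 1 + c * x ^ (p*(2*γ-1)) := by positivity
  exact mul_pos (by positivity) (div_pos (by linarith) hA)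

theorem stmt9_general (p γ δ : ℝ) (hp : 1 < p) (hγ : 1/2 < γ) (hδ : 2*γ - 1 ≤ δ)
    (f f' : ℝ → ℝ)
    (hf0 : f 0 = 0)
    (hderiv : ∀ t, HasDerivAt f (f' t) t)
    (hf' : ∀ t, f' t = (1 + (2*γ)^(p-1) * |f t| ^ (p*(2*γ-1))) ^ (-(1/p))) :
    MonotoneOn (fun t => f' t * f t ^ δ) (Set.Ici 0) ∧
    ∀ t : ℝ, 0 < t →
      HasDerivAt (fun s => f' s * f s ^ δ)
        ((1 + (2*γ)^(p-1) * f t ^ (p*(2*γ-1))) ^ (-(2/p)) * f t ^ (δ-1) *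
          ((δ + (2*γ)^(p-1) * (δ + 1 - 2*γ) * f t ^ (p*(2*γ-1))) /
            (1 + (2*γ)^(p-1) * f t ^ (p*(2*γ-1))))) t ∧
      0 < (1 + (2*γ)^(p-1) * f t ^ (p*(2*γ-1))) ^ (-(2/p)) * f t ^ (δ-1) *
          ((δ + (2*γ)^(p-1) * (δ + 1 - 2*γ) * f t ^ (p*(2*γ-1))) /
            (1 + (2*γ)^(p-1) * f t ^ (p*(2*γ-1)))) := by
  have hc : 0 ≤ (2*γ)^(p-1) := Real.rpow_nonneg (by linarith) _
  have hδ0 : 0 < δ := by linarith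
  have hf'pos : ∀ t, 0 < f' t := fun t => by rw [hf' t]; positivity
  have hfpos : ∀ t, 0 < t → 0 < f t := fun t ht =>
    hf0 ▸ strictMono_of_hasDerivAt_pos hderiv hf'pos ht
  have hg' := fun t (ht : 0 < t) =>
    hasDerivAt_mul_rpow_of_pos (δ := δ) (by linarith) hc (hderiv t) hf' (hfpos t ht)
  have hg'pos := fun t (ht : 0 < t) => one_add_mul_rpow_deriv_pos (p := p) hc hδ0 hδ (hfpos t ht)
  refine ⟨monotoneOn_Ici_of_monotoneOn_Ioi ?_ fun t ht => ?_,
    fun t ht => ⟨hg' t ht, hg'pos t ht⟩⟩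
  · refine (strictMonoOn_of_deriv_pos (convex_Ioi 0)
      (fun t ht => (hg' t ht).continuousAt.continuousWithinAt) fun t ht => ?_).monotoneOn
    rw [interior_Ioi] at ht
    exact (hg' t ht).deriv ▸ hg'pos t ht
  · simp only [hf0, Real.zero_rpow hδ0.ne', mul_zero]
    exact mul_nonneg (hf'pos t).le (Real.rpow_nonneg (hfpos t ht).le _)

theorem stmt9 (p γ δ : ℝ) (hp : 1 < p) (hγ : 1/2 < γ) (hδ : 2*γ - 1 ≤ δ)
    (f f' : ℝ → ℝ)
    (hodd : ∀ t, f (-t) = - f t) (hf0 : f 0 = 0)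
    (hderiv : ∀ t, HasDerivAt f (f' t) t)
    (hf' : ∀ t, f' t = (1 + (2*γ)^(p-1) * |f t| ^ (p*(2*γ-1))) ^ (-(1/p))) :
    MonotoneOn (fun t => f' t * f t ^ δ) (Set.Ici 0) ∧
    ∀ t : ℝ, 0 < t →
      HasDerivAt (fun s => f' s * f s ^ δ)
        ((1 + (2*γ)^(p-1) * f t ^ (p*(2*γ-1))) ^ (-(2/p)) * f t ^ (δ-1) *
          ((δ + (2*γ)^(p-1) * (δ + 1 - 2*γ) * f t ^ (p*(2*γ-1))) /
            (1 + (2*γ)^(p-1) * f t ^ (p*(2*γ-1))))) t ∧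
      0 < (1 + (2*γ)^(p-1) * f t ^ (p*(2*γ-1))) ^ (-(2/p)) * f t ^ (δ-1) *
          ((δ + (2*γ)^(p-1) * (δ + 1 - 2*γ) * f t ^ (p*(2*γ-1))) /
            (1 + (2*γ)^(p-1) * f t ^ (p*(2*γ-1)))) :=
  stmt9_general p γ δ hp hγ hδ f f' hf0 hderiv hf'
end

section
/- Suppose w : [0,R) → ℝ is C¹ on [0,R), C² on (0,R), with w(0) = α > 0, w'(0) = 0, w' ≥ 0, w(r) → ∞ as r → R⁻, and satisfies ((w')^{p-1})' ≤ M · h(w) on (0,R) for constants M > 0, p > 1 and a nonnegative continuous function h. Then ∫_α^∞ (∫₀^t h(s) ds)^{-1/p} dt ≤ (M p/(p-1))^{1/p} R < ∞. -/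
open MeasureTheory Set Filter
open scoped Topology ENNReal

/-!
With `q = p / (p - 1)` and `H t = ∫₀ᵗ h`, multiplying `((w')^(p-1))' ≤ M h(w)` by `w' ≥ 0` gives
`((w')^p)' ≤ q M (H ∘ w)'`, so `q M H(w) - (w')^p` is nondecreasing and, since `w'(0) = 0`,
`w' ≤ (q M H(w))^(1/p)`. Thus `r ↦ ∫_α^{w r} H^(-1/p)` grows at rate at most `(q M)^(1/p)`, and
letting `r → R`, where `w r → ∞`, bounds the improper integral by `(q M)^(1/p) R`. To keep the
integrand continuous one works with `(H + ε)^(-1/p)` and lets `ε → 0` by Fatou's lemma.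
-/

theorem rpow_neg_one_div_mul_le {p x y K ε : ℝ} (hp : 0 < p) (hx : 0 ≤ x) (hy : 0 ≤ y)
    (hK : 0 ≤ K) (hε : 0 < ε) (hxy : y ^ p ≤ K * x) :
    (x + ε) ^ (-(1 / p)) * y ≤ K ^ (1 / p) := by
  have hxε : 0 < x + ε := by positivity
  have hy_le : y ≤ K ^ (1 / p) * (x + ε) ^ (1 / p) :=
    calc y = (y ^ p) ^ (1 / p) := by
          rw [← Real.rpow_mul hy, mul_one_div_cancel hp.ne', Real.rpow_one]
      _ ≤ (K * (x + ε)) ^ (1 / p) :=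
        Real.rpow_le_rpow (by positivity) (hxy.trans (by nlinarith)) (by positivity)
      _ = K ^ (1 / p) * (x + ε) ^ (1 / p) := Real.mul_rpow hK hxε.le
  rw [Real.rpow_neg hxε.le, inv_mul_le_iff₀ (by positivity), mul_comm]
  exact hy_le

theorem hasDerivAt_rpow_of_hasDerivAt_rpow_sub_one {p : ℝ} (hp : 1 < p) {u : ℝ → ℝ} {d x : ℝ}
    (hu : ∀ᶠ y in 𝓝 x, 0 ≤ u y) (hd : HasDerivAt (fun y => u y ^ (p - 1)) d x) :
    HasDerivAt (fun y => u y ^ p) (p / (p - 1) * u x * d) x := by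
  have hp1 : p - 1 ≠ 0 := (sub_pos.2 hp).ne'
  have hq : 1 ≤ p / (p - 1) := (one_le_div (sub_pos.2 hp)).2 (by linarith)
  have hcomp := (Real.hasDerivAt_rpow_const (x := u x ^ (p - 1)) (Or.inr hq)).comp x hd
  have hux : (u x ^ (p - 1)) ^ (p / (p - 1) - 1) = u x := by
    rw [← Real.rpow_mul hu.self_of_nhds, div_sub_one hp1, mul_div_cancel₀ _ hp1, sub_sub_cancel,
      Real.rpow_one]
  rw [hux] at hcomp
  refine hcomp.congr_of_eventuallyEq (hu.mono fun y hy => ?_)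
  simp only [Function.comp, ← Real.rpow_mul hy, mul_div_cancel₀ _ hp1]

theorem exists_seq_tendsto_of_hasDerivAt_eq_zero {w w' : ℝ → ℝ} {a b : ℝ} (hab : a < b)
    (hw : ∀ x ∈ Ico a b, HasDerivAt w (w' x) x) (ha : w' a = 0) :
    ∃ c : ℕ → ℝ, (∀ n, c n ∈ Ioo a b) ∧ Tendsto c atTop (𝓝 a) ∧
      Tendsto (w' ∘ c) atTop (𝓝 0) := by
  -- `w'` need not be continuous at `a`; the mean value theorem supplies points where it equals a
  -- difference quotient of `w` at `a`, and those tend to `w' a = 0`.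
  obtain ⟨e, -, he, he_lim⟩ := exists_seq_strictAnti_tendsto' hab
  have hmvt : ∀ n, ∃ c ∈ Ioo a (e n), w' c = slope w a (e n) := fun n => by
    have hsub : Icc a (e n) ⊆ Ico a b := Icc_subset_Ico_right (he n).2
    rw [slope_def_field]
    exact exists_hasDerivAt_eq_slope w w' (he n).1
      (fun x hx => (hw x (hsub hx)).continuousAt.continuousWithinAt)
      (fun x hx => hw x (hsub (Ioo_subset_Icc_self hx)))
  choose c hc hc_slope using hmvt
  refine ⟨c, fun n => ⟨(hc n).1, (hc n).2.trans (he n).2⟩, ?_, ?_⟩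
  · exact tendsto_of_tendsto_of_tendsto_of_le_of_le tendsto_const_nhds he_lim
      (fun n => (hc n).1.le) (fun n => (hc n).2.le)
  · have he_ne : Tendsto e atTop (𝓝[≠] a) :=
      tendsto_nhdsWithin_iff.2 ⟨he_lim, Eventually.of_forall fun n => (he n).1.ne'⟩
    have hslope := ((hw a ⟨le_rfl, hab⟩).tendsto_slope).comp he_ne
    rw [ha] at hslope
    exact hslope.congr fun n => (hc_slope n).symm

theorem rpow_le_mul_sub_of_deriv_rpow_sub_one_le {p a b : ℝ} (hp : 1 < p) {w w' d F f : ℝ → ℝ}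
    (hF : ∀ t, HasDerivAt F (f t) t) (hw : ∀ r ∈ Ico a b, HasDerivAt w (w' r) r)
    (hw'a : w' a = 0) (hw'nn : ∀ r ∈ Ico a b, 0 ≤ w' r)
    (hd : ∀ r ∈ Ioo a b, HasDerivAt (fun r => w' r ^ (p - 1)) (d r) r)
    (hdle : ∀ r ∈ Ioo a b, d r ≤ f (w r)) {r : ℝ} (hr : r ∈ Ico a b) :
    w' r ^ p ≤ p / (p - 1) * (F (w r) - F (w a)) := by
  have hp0 : 0 < p := one_pos.trans hp
  set q := p / (p - 1)
  have hq : 0 < q := div_pos hp0 (sub_pos.2 hp)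
  set ψ : ℝ → ℝ := fun y => q * F (w y) - w' y ^ p
  have hψ' : ∀ y ∈ Ioo a b, HasDerivAt ψ (q * (f (w y) * w' y) - q * w' y * d y) y := by
    intro y hy
    have hnn : ∀ᶠ z in 𝓝 y, 0 ≤ w' z :=
      eventually_of_mem (Ioo_mem_nhds hy.1 hy.2) fun z hz => hw'nn z (Ioo_subset_Ico_self hz)
    exact (((hF (w y)).comp y (hw y (Ioo_subset_Ico_self hy))).const_mul q).sub
      (hasDerivAt_rpow_of_hasDerivAt_rpow_sub_one hp hnn (hd y hy))
  have hψ_mono : MonotoneOn ψ (Ioo a b) := by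
    refine monotoneOn_of_hasDerivWithinAt_nonneg
      (f' := fun y => q * (f (w y) * w' y) - q * w' y * d y) (convex_Ioo a b)
      (fun y hy => (hψ' y hy).continuousAt.continuousWithinAt) ?_ ?_
    · rw [interior_Ioo]
      exact fun y hy => (hψ' y hy).hasDerivWithinAt
    · rw [interior_Ioo]
      intro y hy
      have := mul_nonneg (mul_nonneg hq.le (hw'nn y (Ioo_subset_Ico_self hy)))
        (sub_nonneg.2 (hdle y hy))
      linarith
  rcases hr.1.eq_or_lt with rfl | har
  · rw [hw'a, Real.zero_rpow hp0.ne', sub_self, mul_zero]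
  obtain ⟨c, hc, hc_lim, hw'c⟩ := exists_seq_tendsto_of_hasDerivAt_eq_zero har
    (fun x hx => hw x ⟨hx.1, hx.2.trans hr.2⟩) hw'a
  have hψc : Tendsto (ψ ∘ c) atTop (𝓝 (q * F (w a) - 0 ^ p)) := by
    have hFw : ContinuousAt (F ∘ w) a :=
      (hF (w a)).continuousAt.comp (hw a ⟨le_rfl, har.trans hr.2⟩).continuousAt
    exact ((hFw.tendsto.comp hc_lim).const_mul q).sub (hw'c.rpow_const (Or.inr hp0.le))
  have hψr : ∀ n, ψ (c n) ≤ ψ r := fun n =>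
    hψ_mono ⟨(hc n).1, (hc n).2.trans hr.2⟩ ⟨har, hr.2⟩ (hc n).2.le
  have hlim := le_of_tendsto' hψc hψr
  rw [Real.zero_rpow hp0.ne'] at hlim
  simp only [ψ] at hlim
  linarith

theorem intervalIntegral_comp_le_mul_of_mul_deriv_le {g w w' : ℝ → ℝ} {a b C : ℝ}
    (hg : Continuous g) (hw : ∀ r ∈ Ico a b, HasDerivAt w (w' r) r)
    (hC : ∀ r ∈ Ioo a b, g (w r) * w' r ≤ C) {r : ℝ} (hr : r ∈ Ico a b) :
    ∫ t in w a..w r, g t ≤ C * (r - a) := by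
  have hΦ : ∀ y ∈ Ico a b, HasDerivAt (fun y => ∫ t in w a..w y, g t) (g (w y) * w' y) y :=
    fun y hy => ((hg.integral_hasStrictDerivAt (w a) (w y)).hasDerivAt).comp y (hw y hy)
  have key := (convex_Ico a b).image_sub_le_mul_sub_of_deriv_le
    (fun y hy => (hΦ y hy).continuousAt.continuousWithinAt)
    (fun y hy => (hΦ y (interior_subset hy)).differentiableAt.differentiableWithinAt)
    (fun y hy => (hΦ y (interior_subset hy)).deriv ▸ hC y (by rwa [interior_Ico] at hy))
    a ⟨le_rfl, hr.1.trans_lt hr.2⟩ r hr hr.1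
  simpa only [intervalIntegral.integral_same, sub_zero] using key

theorem lintegral_Ioi_le_of_intervalIntegral_le {g : ℝ → ℝ} {α B : ℝ} (hg : Continuous g)
    (hgnn : ∀ t, 0 ≤ g t) (hB : ∀ x, α ≤ x → ∫ t in α..x, g t ≤ B) :
    ∫⁻ t in Ioi α, ENNReal.ofReal (g t) ≤ ENNReal.ofReal B := by
  have hcover := AECover.lintegral_tendsto_of_countably_generated
    (aecover_Iic (μ := volume.restrict (Ioi α)) tendsto_id)
    hg.measurable.ennreal_ofReal.aemeasurable
  refine le_of_tendsto hcover ((eventually_ge_atTop α).mono fun x hx => ?_)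
  rw [id, Measure.restrict_restrict measurableSet_Iic, Iic_inter_Ioi,
    ← ofReal_integral_eq_lintegral_ofReal hg.integrableOn_Ioc (ae_of_all _ fun t => hgnn t),
    ← intervalIntegral.integral_of_le hx]
  exact ENNReal.ofReal_le_ofReal (hB x hx)

theorem lintegral_Ioi_le_of_mul_deriv_le {g w w' : ℝ → ℝ} {a R C : ℝ} (hg : Continuous g)
    (hgnn : ∀ t, 0 ≤ g t) (haR : a < R) (hC0 : 0 ≤ C)
    (hw : ∀ r ∈ Ico a R, HasDerivAt w (w' r) r) (hblow : Tendsto w (𝓝[<] R) atTop)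
    (hC : ∀ r ∈ Ioo a R, g (w r) * w' r ≤ C) :
    ∫⁻ t in Ioi (w a), ENNReal.ofReal (g t) ≤ ENNReal.ofReal (C * (R - a)) := by
  refine lintegral_Ioi_le_of_intervalIntegral_le hg hgnn fun x hx => ?_
  obtain ⟨r, hxr, hr⟩ := ((hblow.eventually_ge_atTop x).and
    (Ioo_mem_nhdsLT haR)).exists
  calc ∫ t in w a..x, g t
      ≤ ∫ t in w a..w r, g t := intervalIntegral.integral_mono_interval le_rfl hx hxr
        (ae_of_all _ fun t => hgnn t) (hg.intervalIntegrable _ _)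
    _ ≤ C * (r - a) := intervalIntegral_comp_le_mul_of_mul_deriv_le hg hw hC
        (Ioo_subset_Ico_self hr)
    _ ≤ C * (R - a) := by gcongr; exact hr.2.le

theorem lintegral_ofReal_rpow_le_of_forall_add_le {X : Type*} [MeasurableSpace X]
    {μ : Measure X} {H : X → ℝ} {s : ℝ} {B : ℝ≥0∞} (hH : Measurable H)
    (hHnn : ∀ᵐ x ∂μ, 0 ≤ H x) (hs : s ≠ 0)
    (hB : ∀ ε > 0, ∫⁻ x, ENNReal.ofReal ((max (H x) 0 + ε) ^ s) ∂μ ≤ B) :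
    ∫⁻ x, ENNReal.ofReal (H x ^ s) ∂μ ≤ B := by
  set ε : ℕ → ℝ := fun n => 1 / (n + 1)
  set f : ℕ → X → ℝ≥0∞ := fun n x => ENNReal.ofReal ((max (H x) 0 + ε n) ^ s)
  have hf : ∀ n, Measurable (f n) := fun n => by fun_prop
  have hf_lim : ∀ᵐ x ∂μ, ENNReal.ofReal (H x ^ s) ≤ liminf (fun n => f n x) atTop := by
    filter_upwards [hHnn] with x hx
    rcases hx.eq_or_lt with h0 | hpos
    -- at zeros of `H` the integrand is the junk value `0 ^ s = 0`
    · simp [← h0, Real.zero_rpow hs]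
    have hε : Tendsto (fun n => max (H x) 0 + ε n) atTop (𝓝 (H x)) := by
      simpa [ε, max_eq_left hx] using tendsto_one_div_add_atTop_nhds_zero_nat.const_add (max (H x) 0)
    exact ((ENNReal.continuous_ofReal.tendsto _).comp
      (hε.rpow_const (Or.inl hpos.ne'))).liminf_eq.ge
  calc ∫⁻ x, ENNReal.ofReal (H x ^ s) ∂μ
      ≤ ∫⁻ x, liminf (fun n => f n x) atTop ∂μ := lintegral_mono_ae hf_lim
    _ ≤ liminf (fun n => ∫⁻ x, f n x ∂μ) atTop := lintegral_liminf_le hf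
    _ ≤ B := liminf_le_of_frequently_le' (Frequently.of_forall fun n => hB _ (by positivity))

theorem stmt14 (p R M α : ℝ) (hp : 1 < p) (hR : 0 < R) (hM : 0 < M) (hα : 0 < α)
    (h : ℝ → ℝ) (hh : Continuous h) (hhnn : ∀ s, 0 ≤ h s)
    (w w' d : ℝ → ℝ)
    (hw0 : w 0 = α) (hw'0 : w' 0 = 0)
    (hw : ∀ r ∈ Set.Ico (0:ℝ) R, HasDerivAt w (w' r) r)
    (hw'nn : ∀ r ∈ Set.Ico (0:ℝ) R, 0 ≤ w' r)
    (hd : ∀ r ∈ Set.Ioo (0:ℝ) R, HasDerivAt (fun r => (w' r) ^ (p-1)) (d r) r)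
    (hdle : ∀ r ∈ Set.Ioo (0:ℝ) R, d r ≤ M * h (w r))
    (hblow : Filter.Tendsto w (nhdsWithin R (Set.Iio R)) Filter.atTop) :
    (∫⁻ t in Set.Ioi α, ENNReal.ofReal ((∫ s in (0:ℝ)..t, h s) ^ (-(1/p)))) ≤
      ENNReal.ofReal ((M * p / (p-1)) ^ (1/p) * R) := by
  set H : ℝ → ℝ := fun t => ∫ s in (0:ℝ)..t, h s
  have hH : ∀ t, HasDerivAt H (h t) t := fun t => (hh.integral_hasStrictDerivAt 0 t).hasDerivAt
  have hHc : Continuous H := continuous_iff_continuousAt.2 fun t => (hH t).continuousAt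
  have hHnn : ∀ t, 0 ≤ t → 0 ≤ H t := fun t ht =>
    intervalIntegral.integral_nonneg ht fun s _ => hhnn s
  have hK : 0 ≤ M * p / (p - 1) := by have := sub_pos.2 hp; positivity
  have henergy : ∀ r ∈ Ico 0 R, w' r ^ p ≤ M * p / (p - 1) * max (H (w r)) 0 := fun r hr =>
    calc w' r ^ p ≤ p / (p - 1) * (M * H (w r) - M * H (w 0)) :=
          rpow_le_mul_sub_of_deriv_rpow_sub_one_le hp (fun t => (hH t).const_mul M)
            hw hw'0 hw'nn hd hdle hr
      _ = M * p / (p - 1) * H (w r) - M * p / (p - 1) * H α := by rw [hw0]; ring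
      _ ≤ M * p / (p - 1) * max (H (w r)) 0 := by
          linarith [mul_le_mul_of_nonneg_left (le_max_left (H (w r)) 0) hK,
            mul_nonneg hK (hHnn α hα.le)]
  refine lintegral_ofReal_rpow_le_of_forall_add_le hHc.measurable
    ((ae_restrict_iff' measurableSet_Ioi).2 (ae_of_all _ fun t ht => hHnn t (hα.trans ht).le))
    (by simp [(one_pos.trans hp).ne']) fun ε hε => ?_
  have hbound := lintegral_Ioi_le_of_mul_deriv_le
    (g := fun t => (max (H t) 0 + ε) ^ (-(1 / p)))
    ((hHc.max continuous_const).add continuous_const |>.rpow_const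
      fun t => Or.inl (by positivity : max (H t) 0 + ε ≠ 0))
    (fun t => Real.rpow_nonneg (by positivity) _) hR (Real.rpow_nonneg hK _) hw hblow
    fun r hr => rpow_neg_one_div_mul_le (one_pos.trans hp) (le_max_right _ _)
      (hw'nn r (Ioo_subset_Ico_self hr)) hK hε (henergy r (Ioo_subset_Ico_self hr))
  rwa [hw0, sub_zero] at hbound
end
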